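/- arXiv:1311.5193 — 3 statements merged into one kernel-verified Lean document; each statement's English description precedes it below -/
import Mathlib

section
/- On the path L^n with exactly one node i of threshold 2 (all other thresholds 1), the singleton {i} is an optimal TWC target set for every time-window size λ ≥ 1. -/
/-!
Once `i` is seeded, every other node has threshold 1, so the influenced set after `r` rounds is
the ball of radius `r` around `i`: the nodes at distance exactly `r` became influenced in round
`r`, hence are still active in round `r + 1` (as `1 ≤ λ`) and pass the influence one step
further out. Optimality holds because, all thresholds being positive, the empty set influences
nothing.
-/

set_option linter.unusedVariables false

open Finset

variable {V : Type*} [Fintype V] [DecidableEq V]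

/-- `influenced G t lam S r` : set of influenced nodes after round `r`. -/
def influenced (G : SimpleGraph V) [DecidableRel G.Adj] (t : V → ℕ) (lam : ℕ)
    (S : Finset V) : ℕ → Finset V
  | 0 => S
  | r + 1 =>
    let prev := influenced G t lam S r
    let A := if r + 1 ≤ lam then prev else prev \ influenced G t lam S (r - lam)
    prev ∪ Finset.univ.filter fun v => t v ≤ (G.neighborFinset v ∩ A).card
  termination_by r => r
  decreasing_by all_goals omega

/-- `activeSet G t lam S r` : set of active nodes at round `r`. -/
def activeSet (G : SimpleGraph V) [DecidableRel G.Adj] (t : V → ℕ) (lam : ℕ)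
    (S : Finset V) (r : ℕ) : Finset V :=
  if r = 0 then ∅
  else if r ≤ lam then influenced G t lam S (r - 1)
  else influenced G t lam S (r - 1) \ influenced G t lam S (r - 1 - lam)

def isTargetSet (G : SimpleGraph V) [DecidableRel G.Adj] (t : V → ℕ) (lam : ℕ)
    (S : Finset V) : Prop :=
  ∃ r, influenced G t lam S r = Finset.univ

def pathGraph (n : ℕ) : SimpleGraph (Fin n) where
  Adj i j := i.val + 1 = j.val ∨ j.val + 1 = i.val
  symm := ⟨fun i j h => h.symm⟩
  loopless := ⟨fun i h => by rcases h with h | h <;> omega⟩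

instance (n : ℕ) : DecidableRel (pathGraph n).Adj :=
  fun i j => inferInstanceAs (Decidable (i.val + 1 = j.val ∨ j.val + 1 = i.val))

def ringGraph (n : ℕ) : SimpleGraph (Fin n) where
  Adj i j := i ≠ j ∧ ((i.val + 1) % n = j.val ∨ (j.val + 1) % n = i.val)
  symm := ⟨fun i j h => ⟨h.1.symm, h.2.symm⟩⟩
  loopless := ⟨fun i h => h.1 rfl⟩

instance (n : ℕ) : DecidableRel (ringGraph n).Adj :=
  fun i j => inferInstanceAs (Decidable (_ ∧ (_ ∨ _)))

instance : DecidableRel (⊤ : SimpleGraph V).Adj :=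
  fun a b => inferInstanceAs (Decidable (a ≠ b))

section Diffusion

variable (G : SimpleGraph V) [DecidableRel G.Adj] (t : V → ℕ) (lam : ℕ) (S : Finset V)

lemma influenced_succ (r : ℕ) :
    influenced G t lam S (r + 1) = influenced G t lam S r ∪
      univ.filter fun v => t v ≤ #(G.neighborFinset v ∩ activeSet G t lam S (r + 1)) := by
  rw [influenced]
  simp only [activeSet, Nat.add_one_ne_zero, if_false, Nat.add_sub_cancel]

lemma mem_activeSet_succ {r : ℕ} {u : V} :
    u ∈ activeSet G t lam S (r + 1) ↔
      u ∈ influenced G t lam S r ∧ (lam ≤ r → u ∉ influenced G t lam S (r - lam)) := by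
  simp only [activeSet, Nat.add_one_ne_zero, if_false, Nat.add_sub_cancel]
  split_ifs with h
  · exact ⟨fun hu => ⟨hu, by omega⟩, And.left⟩
  · simp only [mem_sdiff]
    exact ⟨fun hu => ⟨hu.1, fun _ => hu.2⟩, fun hu => ⟨hu.1, hu.2 (by omega)⟩⟩

variable {t}

lemma influenced_empty (ht : ∀ v, 0 < t v) (r : ℕ) : influenced G t lam ∅ r = ∅ := by
  induction r with
  | zero => rw [influenced]
  | succ r ih =>
    have hactive : activeSet G t lam ∅ (r + 1) = ∅ :=
      eq_empty_of_forall_notMem fun u hu => by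
        simpa [ih] using ((mem_activeSet_succ G t lam ∅).mp hu).1
    simpa [influenced_succ, ih, hactive] using fun v => (ht v).ne'

lemma isTargetSet.nonempty [Nonempty V] (ht : ∀ v, 0 < t v) (hS : isTargetSet G t lam S) :
    S.Nonempty := by
  obtain ⟨r, hr⟩ := hS
  rw [nonempty_iff_ne_empty]
  rintro rfl
  rw [influenced_empty G lam ht] at hr
  exact univ_nonempty.ne_empty hr.symm

end Diffusion

section Path

variable {n : ℕ}

def pathBall (i : Fin n) (r : ℕ) : Finset (Fin n) :=
  univ.filter fun v => v.val ≤ i.val + r ∧ i.val ≤ v.val + r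

lemma mem_pathBall {i v : Fin n} {r : ℕ} :
    v ∈ pathBall i r ↔ v.val ≤ i.val + r ∧ i.val ≤ v.val + r := by
  simp [pathBall]

lemma exists_adj_of_mem_pathBall_succ {i v : Fin n} {r : ℕ} (hv : v ∉ pathBall i r)
    (hv' : v ∈ pathBall i (r + 1)) :
    ∃ u : Fin n, (pathGraph n).Adj v u ∧ (u.val = i.val + r ∨ u.val + r = i.val) := by
  rw [mem_pathBall] at hv hv'
  have := v.isLt
  rcases Nat.lt_or_ge i.val v.val with h | h
  · exact ⟨⟨i.val + r, by omega⟩, Or.inr (by dsimp only; omega), Or.inl rfl⟩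
  · exact ⟨⟨i.val - r, by omega⟩, Or.inl (by dsimp only; omega),
      Or.inr (by dsimp only; omega)⟩

lemma influenced_pathGraph_singleton {lam : ℕ} (hlam : 1 ≤ lam) {t : Fin n → ℕ} {i : Fin n}
    (ht : ∀ v, v ≠ i → t v = 1) (r : ℕ) :
    influenced (pathGraph n) t lam {i} r = pathBall i r := by
  induction r using Nat.strong_induction_on with
  | _ r ih =>
    cases r with
    | zero =>
      ext v
      simp only [influenced, mem_singleton, Fin.ext_iff, mem_pathBall, add_zero, Fin.val_fin_le]
      omega
    | succ r =>
      have hactive (u : Fin n) : u ∈ activeSet (pathGraph n) t lam {i} (r + 1) ↔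
          u ∈ pathBall i r ∧ (lam ≤ r → u ∉ pathBall i (r - lam)) := by
        rw [mem_activeSet_succ, ih r (by omega), ih (r - lam) (by omega)]
      ext v
      simp only [influenced_succ, ih r (by omega), mem_union, mem_filter, mem_univ, true_and]
      by_cases hv : v ∈ pathBall i r
      · simp only [hv, true_or, true_iff]
        rw [mem_pathBall] at hv ⊢
        omega
      have hvi : v ≠ i := by rintro rfl; simp [mem_pathBall] at hv
      simp only [hv, false_or, ht v hvi, one_le_card]
      constructor
      · rintro ⟨u, hu⟩
        rw [mem_inter, SimpleGraph.mem_neighborFinset, hactive, mem_pathBall] at hu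
        obtain ⟨hadj, hur, -⟩ := hu
        rw [mem_pathBall]
        change v.val + 1 = u.val ∨ u.val + 1 = v.val at hadj
        omega
      · intro hv'
        obtain ⟨u, hadj, hdist⟩ := exists_adj_of_mem_pathBall_succ hv hv'
        refine ⟨u, mem_inter.mpr ⟨(SimpleGraph.mem_neighborFinset _ _ _).mpr hadj, ?_⟩⟩
        rw [hactive, mem_pathBall, mem_pathBall]
        omega

lemma pathBall_eq_univ (i : Fin n) : pathBall i n = univ := by
  ext v
  simp only [mem_pathBall, mem_univ, iff_true]
  omega

end Path

/-- on a path with exactly one node `i` of threshold 2 (all other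
thresholds 1, endpoints having threshold 1), the singleton `{i}` is an optimal
TWC target set for every window size `λ ≥ 1`. -/
theorem stmt5 (n lam : ℕ) (hlam : 1 ≤ lam) (t : Fin n → ℕ)
    (htv : ∀ v, t v = 1 ∨ t v = 2)
    (i : Fin n) (huniq : ∀ v, t v = 2 → v = i) :
    isTargetSet (pathGraph n) t lam {i} ∧
    ∀ S : Finset (Fin n), isTargetSet (pathGraph n) t lam S →
      ({i} : Finset (Fin n)).card ≤ S.card := by
  have ht_one : ∀ v, v ≠ i → t v = 1 := fun v hv =>
    (htv v).resolve_right fun h => hv (huniq v h)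
  have ht_pos : ∀ v, 0 < t v := fun v => by rcases htv v with h | h <;> omega
  have : Nonempty (Fin n) := ⟨i⟩
  refine ⟨⟨n, ?_⟩, fun S hS => ?_⟩
  · rw [influenced_pathGraph_singleton hlam ht_one, pathBall_eq_univ]
  · rw [card_singleton]
    exact card_pos.mpr (hS.nonempty _ _ _ ht_pos)
end

section
/- Let Σ(i) denote the minimum size of a TWC target set for the subpath L_i^n = {i,…,n−1} that contains both i and n−1. Then for each vertex k of L^n with t(k)=2 there exists an integer Σ_k such that Σ(i) ∈ {Σ_k, Σ_k − 1} for every i with k ≤ i ≤ D[k], where D[k] = min{x > k : t(x)=2}. -/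
set_option linter.unusedVariables false

open Finset

variable {V : Type*} [Fintype V] [DecidableEq V]

/-- `sigmaMin n lam t i hi` : the minimum size of a TWC target set for the
subpath `L_i^n = {i,…,n-1}` that contains both extreme nodes `i` and `n-1`. -/
noncomputable def sigmaMin (n lam : ℕ) (t : Fin n → ℕ) (i : ℕ) (hi : i < n) : ℕ :=
  sInf { c : ℕ | ∃ S : Finset (Fin (n - i)),
    isTargetSet (pathGraph (n - i))
      (fun k => t ⟨i + (k : ℕ), by have := k.isLt; omega⟩) lam S ∧
    (⟨0, by omega⟩ : Fin (n - i)) ∈ S ∧ (⟨n - i - 1, by omega⟩ : Fin (n - i)) ∈ S ∧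
    S.card = c }

/-!
Once both ends of the path are seeds, the seeds cut it into gaps, and inside a gap `(s, s')`
influence spreads inwards from both ends, one vertex per round. A threshold-1 vertex lets a wave
through; a threshold-2 vertex `b` stops it, and is itself influenced only if the waves arrive at
its two neighbours less than `λ` rounds apart. A second threshold-2 vertex in the same gap could
never be reached. So seed sets containing both ends are target sets exactly when every gap holds
at most one threshold-2 vertex, and that one fits the window (`ValidSeeds`).

With this description, for `i < d` with `t d = 2` and only threshold-1 vertices in between:
adding `i` to a valid seed set of `{d, …, n - 1}` is valid, so `Σ(i) ≤ Σ(d) + 1`; and replacing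
the seeds `≤ d` of a valid seed set of `{i, …, n - 1}` by `d` is valid, since `d` can only be the
threshold-2 vertex of its gap, so `Σ(d) ≤ Σ(i)`. Hence `σ = Σ(d) + 1` works.
-/

def twosBetween (t : ℕ → ℕ) (s s' : ℕ) : Finset ℕ := (Ioo s s').filter (t · = 2)

def IsGap (A : Finset ℕ) (s s' : ℕ) : Prop :=
  s ∈ A ∧ s' ∈ A ∧ s < s' ∧ ∀ x ∈ A, x ≤ s ∨ s' ≤ x

/-- The waves started at `s` and `s'` reach `b` at rounds `b - s` and `s' - b`; a threshold-2
vertex `b` is influenced iff both neighbours are active together, i.e. these rounds differ by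
less than `lam`. -/
def WindowFits (lam b s s' : ℕ) : Prop := s + s' < 2 * b + lam ∧ 2 * b < s + s' + lam

def ValidGap (t : ℕ → ℕ) (lam s s' : ℕ) : Prop :=
  twosBetween t s s' = ∅ ∨ ∃ b, twosBetween t s s' = {b} ∧ WindowFits lam b s s'

def ValidSeeds (t : ℕ → ℕ) (lam : ℕ) (A : Finset ℕ) : Prop :=
  ∀ s s', IsGap A s s' → ValidGap t lam s s'

/-- The round at which `v ∈ [s, s']` is influenced when only the ends of the gap are seeds. -/
def GapTime (t : ℕ → ℕ) (lam s s' v a : ℕ) : Prop :=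
  (twosBetween t s s' = ∅ ∧ a = min (v - s) (s' - v)) ∨
  ∃ b, twosBetween t s s' = {b} ∧
    ((v < b ∧ a = v - s) ∨ (b < v ∧ a = s' - v) ∨
      (v = b ∧ WindowFits lam b s s' ∧ a = max (v - s) (s' - v)))

def ActivatesAt (t : ℕ → ℕ) (lam : ℕ) (A : Finset ℕ) (v a : ℕ) : Prop :=
  (v ∈ A ∧ a = 0) ∨ ∃ s s', IsGap A s s' ∧ s < v ∧ v < s' ∧ GapTime t lam s s' v a

def ReachedBy (t : ℕ → ℕ) (lam : ℕ) (A : Finset ℕ) (v r : ℕ) : Prop :=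
  ∃ a ≤ r, ActivatesAt t lam A v a

/-- `u` is active in round `r + 1`. -/
def ActiveAt (t : ℕ → ℕ) (lam : ℕ) (A : Finset ℕ) (u r : ℕ) : Prop :=
  ∃ a, ActivatesAt t lam A u a ∧ a ≤ r ∧ r < a + lam

section Gaps

variable {t : ℕ → ℕ} {lam : ℕ} {A : Finset ℕ} {m s s' v : ℕ}

lemma mem_twosBetween {x : ℕ} : x ∈ twosBetween t s s' ↔ s < x ∧ x < s' ∧ t x = 2 := by
  simp [twosBetween, and_assoc]

lemma twosBetween_eq_empty_or_singleton (h : (twosBetween t s s').card ≤ 1) :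
    twosBetween t s s' = ∅ ∨ ∃ b, twosBetween t s s' = {b} := by
  rcases Finset.card_le_one_iff_subset_singleton.1 h with ⟨b, hb⟩
  exact (Finset.subset_singleton_iff.1 hb).imp id fun h => ⟨b, h⟩

lemma IsGap.notMem (hc : IsGap A s s') (hs : s < v) (hv : v < s') : v ∉ A := fun hvA => by
  have := hc.2.2.2 v hvA; omega

lemma IsGap.eq_of_mem {s₂ s₂' : ℕ} (hc : IsGap A s s') (hc₂ : IsGap A s₂ s₂')
    (hs : s ≤ v) (hv : v ≤ s') (hs₂ : s₂ < v) (hv₂ : v < s₂') : s = s₂ ∧ s' = s₂' := by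
  have := hc.2.2.2 s₂ hc₂.1
  have := hc.2.2.2 s₂' hc₂.2.1
  have := hc₂.2.2.2 s hc.1
  have := hc₂.2.2.2 s' hc.2.1
  omega

lemma exists_isGap {a b x : ℕ} (ha : a ∈ A) (hb : b ∈ A) (hax : a ≤ x) (hxb : x < b) :
    ∃ s s', IsGap A s s' ∧ s ≤ x ∧ x < s' := by
  have hlo : (A.filter (· ≤ x)).Nonempty := ⟨a, by simp [ha, hax]⟩
  have hhi : (A.filter (x < ·)).Nonempty := ⟨b, by simp [hb, hxb]⟩
  have hs := Finset.mem_filter.1 ((A.filter (· ≤ x)).max'_mem hlo)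
  have hs' := Finset.mem_filter.1 ((A.filter (x < ·)).min'_mem hhi)
  refine ⟨_, _, ⟨hs.1, hs'.1, by omega, fun y hy => ?_⟩, hs.2, hs'.2⟩
  rcases le_or_gt y x with h | h
  · exact .inl (Finset.le_max' _ y (Finset.mem_filter.2 ⟨hy, h⟩))
  · exact .inr (Finset.min'_le _ y (Finset.mem_filter.2 ⟨hy, h⟩))

lemma exists_isGap_of_notMem (h0 : 0 ∈ A) (h1 : m - 1 ∈ A) (hvm : v < m) (hvA : v ∉ A) :
    ∃ s s', IsGap A s s' ∧ s < v ∧ v < s' := by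
  have hv1 : v < m - 1 := by
    rcases (Nat.le_sub_one_of_lt hvm).lt_or_eq with h | rfl
    exacts [h, absurd h1 hvA]
  obtain ⟨s, s', hc, hs, hs'⟩ := exists_isGap h0 h1 (Nat.zero_le v) hv1
  refine ⟨s, s', hc, hs.lt_of_ne ?_, hs'⟩
  rintro rfl
  exact hvA hc.1

lemma ValidGap.card_twosBetween_le (h : ValidGap t lam s s') : (twosBetween t s s').card ≤ 1 := by
  rcases h with h | ⟨b, h, -⟩ <;> simp [h]

/-- A threshold-2 vertex inside a valid gap is its only one, so the gap may be cut there. -/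
lemma ValidGap.of_two {x : ℕ} (h : ValidGap t lam s s') (hsx : s ≤ x) (hxs : x < s')
    (htx : t x = 2) : ValidGap t lam x s' := by
  rcases hsx.eq_or_lt with rfl | hsx
  · exact h
  left
  have hx : x ∈ twosBetween t s s' := mem_twosBetween.2 ⟨hsx, hxs, htx⟩
  refine Finset.eq_empty_of_forall_notMem fun y hy => ?_
  have hy' : y ∈ twosBetween t s s' := by
    obtain ⟨h1, h2, h3⟩ := mem_twosBetween.1 hy
    exact mem_twosBetween.2 ⟨by omega, h2, h3⟩
  have : y = x := Finset.card_le_one.1 h.card_twosBetween_le y hy' x hx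
  have := (mem_twosBetween.1 hy).1
  omega

end Gaps

section Activation

variable {t : ℕ → ℕ} {lam : ℕ} {A : Finset ℕ} {m s s' v a r : ℕ}

lemma gapTime_of_eq_empty (h : twosBetween t s s' = ∅) :
    GapTime t lam s s' v a ↔ a = min (v - s) (s' - v) := by
  simp [GapTime, h]

lemma gapTime_of_eq_singleton {b : ℕ} (h : twosBetween t s s' = {b}) :
    GapTime t lam s s' v a ↔ (v < b ∧ a = v - s) ∨ (b < v ∧ a = s' - v) ∨
      (v = b ∧ WindowFits lam b s s' ∧ a = max (v - s) (s' - v)) := by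
  simp [GapTime, h]

lemma GapTime.unique {a' : ℕ} (h : GapTime t lam s s' v a) (h' : GapTime t lam s s' v a') :
    a = a' := by
  rcases h with ⟨he, rfl⟩ | ⟨b, hb, h⟩
  · exact ((gapTime_of_eq_empty he).1 h').symm
  · rw [gapTime_of_eq_singleton hb] at h'
    omega

lemma ActivatesAt.unique {a' : ℕ} (h : ActivatesAt t lam A v a) (h' : ActivatesAt t lam A v a') :
    a = a' := by
  rcases h with ⟨hv, rfl⟩ | ⟨s, s', hc, hs, hs', hg⟩ <;>
    rcases h' with ⟨hv', rfl⟩ | ⟨s₂, s₂', hc₂, hs₂, hs₂', hg₂⟩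
  · rfl
  · exact absurd hv (hc₂.notMem hs₂ hs₂')
  · exact absurd hv' (hc.notMem hs hs')
  · obtain ⟨rfl, rfl⟩ := hc.eq_of_mem hc₂ hs.le hs'.le hs₂ hs₂'
    exact hg.unique hg₂

lemma ActivatesAt.lt (hA : ∀ x ∈ A, x < m) (h : ActivatesAt t lam A v a) : v < m := by
  rcases h with ⟨hv, -⟩ | ⟨s, s', hc, -, hs', -⟩
  · exact hA v hv
  · exact hs'.trans (hA s' hc.2.1)

lemma reachedBy_zero_iff : ReachedBy t lam A v 0 ↔ v ∈ A := by
  constructor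
  · rintro ⟨a, ha, ⟨hv, -⟩ | ⟨s, s', -, hs, hs', hg⟩⟩
    · exact hv
    · rcases hg with ⟨-, h⟩ | ⟨b, -, h⟩ <;> omega
  · exact fun hv => ⟨0, le_rfl, .inl ⟨hv, rfl⟩⟩

lemma activeAt_iff {u : ℕ} :
    ActiveAt t lam A u r ↔ ReachedBy t lam A u r ∧ (lam ≤ r → ¬ ReachedBy t lam A u (r - lam)) := by
  constructor
  · rintro ⟨a, h, har, hra⟩
    refine ⟨⟨a, har, h⟩, fun _ ⟨a', ha', h'⟩ => ?_⟩
    rw [h.unique h'] at hra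
    omega
  · rintro ⟨⟨a, har, h⟩, hn⟩
    refine ⟨a, h, har, ?_⟩
    by_contra hra
    exact hn (by omega) ⟨a, by omega, h⟩

lemma activatesAt_iff_gapTime (hc : IsGap A s s') (hs : s ≤ v) (hv : v ≤ s')
    (hB : (twosBetween t s s').card ≤ 1) :
    ActivatesAt t lam A v a ↔ GapTime t lam s s' v a := by
  have hend : v = s ∨ v = s' → (GapTime t lam s s' v a ↔ a = 0) := by
    intro hv'
    rcases twosBetween_eq_empty_or_singleton hB with he | ⟨b, hb⟩
    · rw [gapTime_of_eq_empty he]; omega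
    · have := mem_twosBetween.1 (hb ▸ Finset.mem_singleton_self b)
      rw [gapTime_of_eq_singleton hb]; omega
  constructor
  · rintro (⟨hvA, rfl⟩ | ⟨s₂, s₂', hc₂, hs₂, hs₂', hg⟩)
    · exact (hend (by have := hc.2.2.2 v hvA; omega)).2 rfl
    · obtain ⟨rfl, rfl⟩ := hc.eq_of_mem hc₂ hs hv hs₂ hs₂'
      exact hg
  · intro hg
    by_cases hv' : v = s ∨ v = s'
    · refine .inl ⟨?_, (hend hv').1 hg⟩
      rcases hv' with rfl | rfl
      exacts [hc.1, hc.2.1]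
    · exact .inr ⟨s, s', hc, by omega, by omega, hg⟩

lemma ActivatesAt.exists_le_succ_of_adj (h0 : 0 ∈ A) (h1 : m - 1 ∈ A)
    (hB : ∀ s s', IsGap A s s' → (twosBetween t s s').card ≤ 1) {u : ℕ} (hvm : v < m)
    (hadj : u + 1 = v ∨ v + 1 = u) (htv : t v = 1) (hu : ActivatesAt t lam A u a) :
    ∃ a' ≤ a + 1, ActivatesAt t lam A v a' := by
  by_cases hvA : v ∈ A
  · exact ⟨0, Nat.zero_le _, .inl ⟨hvA, rfl⟩⟩
  obtain ⟨s, s', hc, hs, hs'⟩ := exists_isGap_of_notMem h0 h1 hvm hvA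
  have hgap := hB s s' hc
  rw [activatesAt_iff_gapTime hc (by omega) (by omega) hgap] at hu
  simp_rw [activatesAt_iff_gapTime hc hs.le hs'.le hgap]
  rcases twosBetween_eq_empty_or_singleton hgap with he | ⟨b, hb⟩
  · simp_rw [gapTime_of_eq_empty he] at hu ⊢
    exact ⟨_, by omega, rfl⟩
  · have hbv : v ≠ b := by
      rintro rfl
      simp [mem_twosBetween.1 (hb ▸ Finset.mem_singleton_self v)] at htv
    simp_rw [gapTime_of_eq_singleton hb] at hu ⊢
    rcases hbv.lt_or_gt with hvb | hbv
    · exact ⟨v - s, by omega, .inl ⟨hvb, rfl⟩⟩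
    · exact ⟨s' - v, by omega, .inr (.inl ⟨hbv, rfl⟩)⟩

lemma reachedBy_succ_of_eq_two (h0 : 0 ∈ A) (h1 : m - 1 ∈ A)
    (hB : ∀ s s', IsGap A s s' → (twosBetween t s s').card ≤ 1) (hvm : v < m)
    (htv : t v = 2) (h₁ : ActiveAt t lam A (v - 1) r) (h₂ : ActiveAt t lam A (v + 1) r) :
    ReachedBy t lam A v (r + 1) := by
  by_cases hvA : v ∈ A
  · exact ⟨0, Nat.zero_le _, .inl ⟨hvA, rfl⟩⟩
  obtain ⟨s, s', hc, hs, hs'⟩ := exists_isGap_of_notMem h0 h1 hvm hvA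
  have hgap := hB s s' hc
  have hv : twosBetween t s s' = {v} := by
    have hv := mem_twosBetween.2 ⟨hs, hs', htv⟩
    rcases twosBetween_eq_empty_or_singleton hgap with he | ⟨b, hb⟩
    · simp [he] at hv
    · rw [hb, Finset.mem_singleton] at hv
      rw [hb, hv]
  obtain ⟨a₁, h₁, hr₁⟩ := h₁
  obtain ⟨a₂, h₂, hr₂⟩ := h₂
  rw [activatesAt_iff_gapTime hc (by omega) (by omega) hgap, gapTime_of_eq_singleton hv]
    at h₁ h₂
  refine ⟨max (v - s) (s' - v), by omega, ?_⟩
  rw [activatesAt_iff_gapTime hc hs.le hs'.le hgap, gapTime_of_eq_singleton hv]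
  exact .inr (.inr ⟨rfl, by unfold WindowFits; omega, rfl⟩)

lemma ActivatesAt.exists_pred (hA : ∀ x ∈ A, x < m) (ht : ∀ x < m, t x = 1 ∨ t x = 2)
    (hB : ∀ s s', IsGap A s s' → (twosBetween t s s').card ≤ 1)
    (hv : ActivatesAt t lam A v (r + 1)) :
    (t v = 1 ∧ ∃ u, (u + 1 = v ∨ v + 1 = u) ∧ ActivatesAt t lam A u r) ∨
    (t v = 2 ∧ 0 < v ∧ ActiveAt t lam A (v - 1) r ∧ ActiveAt t lam A (v + 1) r) := by
  rcases hv with ⟨-, h⟩ | ⟨s, s', hc, hs, hs', hg⟩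
  · omega
  have hgap := hB s s' hc
  have hone : v ∉ twosBetween t s s' → t v = 1 := fun hv =>
    (ht v (hs'.trans (hA s' hc.2.1))).resolve_right fun h => hv (mem_twosBetween.2 ⟨hs, hs', h⟩)
  have hgt {u a : ℕ} (hu : s ≤ u) (hu' : u ≤ s') :=
    (activatesAt_iff_gapTime (t := t) (lam := lam) (a := a) hc hu hu' hgap).2
  rcases twosBetween_eq_empty_or_singleton hgap with he | ⟨b, hb⟩
  · refine .inl ⟨hone (by simp [he]), ?_⟩
    rw [gapTime_of_eq_empty he] at hg
    rcases le_or_gt (v - s) (s' - v) with h | h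
    · exact ⟨v - 1, .inl (by omega),
        hgt (by omega) (by omega) ((gapTime_of_eq_empty he).2 (by omega))⟩
    · exact ⟨v + 1, .inr rfl, hgt (by omega) (by omega) ((gapTime_of_eq_empty he).2 (by omega))⟩
  · have hbt := mem_twosBetween.1 (hb ▸ Finset.mem_singleton_self b)
    rw [gapTime_of_eq_singleton hb] at hg
    rcases hg with ⟨hvb, hr⟩ | ⟨hbv, hr⟩ | ⟨rfl, hw, hr⟩
    · refine .inl ⟨hone (by simp [hb]; omega), v - 1, .inl (by omega), hgt (by omega) (by omega) ?_⟩
      exact (gapTime_of_eq_singleton hb).2 (.inl ⟨by omega, by omega⟩)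
    · refine .inl ⟨hone (by simp [hb]; omega), v + 1, .inr rfl, hgt (by omega) (by omega) ?_⟩
      exact (gapTime_of_eq_singleton hb).2 (.inr (.inl ⟨by omega, by omega⟩))
    · unfold WindowFits at hw
      refine .inr ⟨hbt.2.2, by omega, ⟨v - 1 - s, hgt (by omega) (by omega) ?_, by omega⟩,
        ⟨s' - (v + 1), hgt (by omega) (by omega) ?_, by omega⟩⟩
      · exact (gapTime_of_eq_singleton hb).2 (.inl ⟨by omega, rfl⟩)
      · exact (gapTime_of_eq_singleton hb).2 (.inr (.inl ⟨by omega, rfl⟩))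

lemma reachedBy_succ_iff (h0 : 0 ∈ A) (h1 : m - 1 ∈ A) (hA : ∀ x ∈ A, x < m) (hlam : 1 ≤ lam)
    (ht : ∀ x < m, t x = 1 ∨ t x = 2)
    (hB : ∀ s s', IsGap A s s' → (twosBetween t s s').card ≤ 1) (hvm : v < m) :
    ReachedBy t lam A v (r + 1) ↔ ReachedBy t lam A v r ∨
      (t v = 1 ∧ ∃ u, (u + 1 = v ∨ v + 1 = u) ∧ ActiveAt t lam A u r) ∨
      (t v = 2 ∧ 0 < v ∧ ActiveAt t lam A (v - 1) r ∧ ActiveAt t lam A (v + 1) r) := by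
  constructor
  · rintro ⟨a, ha, hv⟩
    rcases ha.lt_or_eq with ha | rfl
    · exact .inl ⟨a, by omega, hv⟩
    rcases hv.exists_pred hA ht hB with ⟨htv, u, hadj, hu⟩ | h
    · exact .inr (.inl ⟨htv, u, hadj, r, hu, le_rfl, by omega⟩)
    · exact .inr (.inr h)
  · rintro (⟨a, ha, hv⟩ | ⟨htv, u, hadj, a, hu, har, -⟩ | ⟨htv, -, h₁, h₂⟩)
    · exact ⟨a, by omega, hv⟩
    · obtain ⟨a', ha', hv⟩ := hu.exists_le_succ_of_adj h0 h1 hB hvm hadj htv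
      exact ⟨a', by omega, hv⟩
    · exact reachedBy_succ_of_eq_two h0 h1 hB hvm htv h₁ h₂

lemma ValidSeeds.reachedBy (hV : ValidSeeds t lam A) (h0 : 0 ∈ A) (h1 : m - 1 ∈ A)
    (hA : ∀ x ∈ A, x < m) (hvm : v < m) : ReachedBy t lam A v m := by
  by_cases hvA : v ∈ A
  · exact ⟨0, Nat.zero_le _, .inl ⟨hvA, rfl⟩⟩
  obtain ⟨s, s', hc, hs, hs'⟩ := exists_isGap_of_notMem h0 h1 hvm hvA
  have hs'm := hA s' hc.2.1
  have hgt (a : ℕ) := activatesAt_iff_gapTime (t := t) (lam := lam) (v := v) (a := a) hc hs.le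
    hs'.le (hV s s' hc).card_twosBetween_le
  rcases hV s s' hc with he | ⟨b, hb, hw⟩
  · exact ⟨_, by omega, (hgt _).2 ((gapTime_of_eq_empty he).2 rfl)⟩
  · simp_rw [ReachedBy, hgt, gapTime_of_eq_singleton hb]
    rcases lt_trichotomy v b with h | rfl | h
    · exact ⟨_, by omega, .inl ⟨h, rfl⟩⟩
    · exact ⟨_, by omega, .inr (.inr ⟨rfl, hw, rfl⟩)⟩
    · exact ⟨_, by omega, .inr (.inl ⟨h, rfl⟩)⟩

end Activation

section PathGraph

variable {m : ℕ}

lemma mem_influenced_succ_iff {G : SimpleGraph V} [DecidableRel G.Adj] {t : V → ℕ} {lam : ℕ}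
    {S : Finset V} {r : ℕ} {v : V} :
    v ∈ influenced G t lam S (r + 1) ↔ v ∈ influenced G t lam S r ∨
      t v ≤ (G.neighborFinset v ∩ activeSet G t lam S (r + 1)).card := by
  rw [influenced, activeSet, if_neg r.succ_ne_zero, Nat.add_sub_cancel]
  simp

lemma mem_activeSet_succ_iff {G : SimpleGraph V} [DecidableRel G.Adj] {t : V → ℕ} {lam : ℕ}
    {S : Finset V} {r : ℕ} {v : V} :
    v ∈ activeSet G t lam S (r + 1) ↔
      v ∈ influenced G t lam S r ∧ (lam ≤ r → v ∉ influenced G t lam S (r - lam)) := by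
  rw [activeSet, if_neg r.succ_ne_zero, Nat.add_sub_cancel]
  split_ifs with h
  · simp only [iff_self_and]
    omega
  · simp only [Finset.mem_sdiff, show lam ≤ r by omega, forall_const]

lemma mem_pathGraph_neighborFinset {u v : Fin m} :
    u ∈ (pathGraph m).neighborFinset v ↔ u.val + 1 = v.val ∨ v.val + 1 = u.val := by
  rw [SimpleGraph.mem_neighborFinset]
  exact Or.comm

lemma one_le_card_pathGraph_neighborFinset_inter {v : Fin m} {W : Finset (Fin m)} :
    1 ≤ ((pathGraph m).neighborFinset v ∩ W).card ↔
      ∃ u ∈ W, u.val + 1 = v.val ∨ v.val + 1 = u.val := by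
  simp only [Finset.one_le_card, Finset.Nonempty, Finset.mem_inter, mem_pathGraph_neighborFinset]
  exact exists_congr fun u => and_comm

lemma two_le_card_pathGraph_neighborFinset_inter {v : Fin m} {W : Finset (Fin m)} :
    2 ≤ ((pathGraph m).neighborFinset v ∩ W).card ↔
      ∃ u ∈ W, ∃ w ∈ W, u.val + 1 = v.val ∧ v.val + 1 = w.val := by
  constructor
  · intro h
    obtain ⟨a, ha, b, hb, hab⟩ := Finset.one_lt_card.1 h
    simp only [Finset.mem_inter, mem_pathGraph_neighborFinset] at ha hb
    have hab' : a.val ≠ b.val := fun h => hab (Fin.ext h)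
    rcases ha.1 with ha' | ha' <;> rcases hb.1 with hb' | hb'
    · omega
    · exact ⟨a, ha.2, b, hb.2, ha', hb'⟩
    · exact ⟨b, hb.2, a, ha.2, hb', ha'⟩
    · omega
  · rintro ⟨u, hu, w, hw, hvu, hwv⟩
    have huw : u ≠ w := fun h => by rw [h] at hvu; omega
    calc 2 = ({u, w} : Finset (Fin m)).card := (Finset.card_pair huw).symm
      _ ≤ _ := Finset.card_le_card fun x hx => by
        rcases Finset.mem_insert.1 hx with rfl | hx
        · exact Finset.mem_inter.2 ⟨mem_pathGraph_neighborFinset.2 (.inl hvu), hu⟩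
        · rw [Finset.mem_singleton.1 hx]
          exact Finset.mem_inter.2 ⟨mem_pathGraph_neighborFinset.2 (.inr hwv), hw⟩

theorem mem_influenced_iff_reachedBy {lam : ℕ} (hlam : 1 ≤ lam) {t : ℕ → ℕ}
    (ht : ∀ x < m, t x = 1 ∨ t x = 2) {S : Finset (Fin m)}
    (h0 : 0 ∈ S.image Fin.val) (h1 : m - 1 ∈ S.image Fin.val)
    (hB : ∀ s s', IsGap (S.image Fin.val) s s' → (twosBetween t s s').card ≤ 1) (r : ℕ)
    (v : Fin m) :
    v ∈ influenced (pathGraph m) (fun k => t k.val) lam S r ↔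
      ReachedBy t lam (S.image Fin.val) v.val r := by
  have hA : ∀ x ∈ S.image Fin.val, x < m := by simp
  induction r using Nat.strong_induction_on generalizing v with
  | _ r IH =>
  rcases r with _ | r
  · rw [reachedBy_zero_iff, influenced, Fin.val_injective.mem_finset_image]
  have hact (u : Fin m) : u ∈ activeSet (pathGraph m) (fun k => t k.val) lam S (r + 1) ↔
      ActiveAt t lam (S.image Fin.val) u.val r := by
    rw [activeAt_iff, mem_activeSet_succ_iff]
    exact and_congr (IH r (by omega) u)
      (imp_congr_right fun _ => not_congr (IH (r - lam) (by omega) u))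
  have hlt {u r : ℕ} (hu : ActiveAt t lam (S.image Fin.val) u r) : u < m :=
    hu.elim fun _ h => h.1.lt hA
  rw [mem_influenced_succ_iff, reachedBy_succ_iff h0 h1 hA hlam ht hB v.isLt]
  refine or_congr (IH r (Nat.lt_succ_self r) v) ?_
  rcases ht v v.isLt with htv | htv
  · simp only [htv, one_le_card_pathGraph_neighborFinset_inter, hact]
    refine ⟨fun ⟨u, hu, hadj⟩ => .inl ⟨trivial, u, hadj, hu⟩, ?_⟩
    rintro (⟨-, u, hadj, hu⟩ | ⟨h, -⟩)
    · exact ⟨⟨u, hlt hu⟩, hu, hadj⟩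
    · omega
  · simp only [htv, two_le_card_pathGraph_neighborFinset_inter, hact]
    refine ⟨fun ⟨u, hu, w, hw, hu', hw'⟩ => .inr ⟨trivial, by omega, ?_, ?_⟩, ?_⟩
    · rwa [show v.val - 1 = u.val by omega]
    · rwa [hw']
    rintro (⟨h, -⟩ | ⟨-, hv, h₁, h₂⟩)
    · omega
    · exact ⟨⟨_, hlt h₁⟩, h₁, ⟨_, hlt h₂⟩, h₂, by simp; omega, rfl⟩

lemma notMem_influenced_of_twos {lam : ℕ} {t : ℕ → ℕ} (ht : ∀ x < m, 1 ≤ t x)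
    {S : Finset (Fin m)} {b₁ b₂ : ℕ} (hb₁ : t b₁ = 2) (hb₂ : t b₂ = 2) (hlt : b₁ < b₂)
    (hS : ∀ x ∈ S, x.val < b₁ ∨ b₂ < x.val) (r : ℕ) {v : Fin m} (hv₁ : b₁ ≤ v.val)
    (hv₂ : v.val ≤ b₂) : v ∉ influenced (pathGraph m) (fun k => t k.val) lam S r := by
  induction r generalizing v with
  | zero =>
    rw [influenced]
    intro hv
    have := hS v hv
    omega
  | succ r IH =>
    rw [mem_influenced_succ_iff]
    rintro (hv | hv)
    · exact IH hv₁ hv₂ hv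
    have hout (u : Fin m) (hu : u ∈ activeSet (pathGraph m) (fun k => t k.val) lam S (r + 1)) :
        u.val < b₁ ∨ b₂ < u.val := by
      by_contra h
      exact IH (by omega) (by omega) (mem_activeSet_succ_iff.1 hu).1
    by_cases hend : v.val = b₁ ∨ v.val = b₂
    · have htv : t v.val = 2 := by rcases hend with h | h <;> rwa [h]
      rw [htv, two_le_card_pathGraph_neighborFinset_inter] at hv
      obtain ⟨u, hu, w, hw, hu', hw'⟩ := hv
      have := hout u hu
      have := hout w hw
      omega
    · obtain ⟨u, hu, hadj⟩ :=
        one_le_card_pathGraph_neighborFinset_inter.1 ((ht v v.isLt).trans hv)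
      have := hout u hu
      omega

theorem isTargetSet_pathGraph_iff {lam : ℕ} (hlam : 1 ≤ lam) {t : ℕ → ℕ}
    (ht : ∀ x < m, t x = 1 ∨ t x = 2) {S : Finset (Fin m)}
    (h0 : 0 ∈ S.image Fin.val) (h1 : m - 1 ∈ S.image Fin.val) :
    isTargetSet (pathGraph m) (fun k => t k.val) lam S ↔ ValidSeeds t lam (S.image Fin.val) := by
  constructor
  · rintro ⟨R, hR⟩
    have hall (v : Fin m) : v ∈ influenced (pathGraph m) (fun k => t k.val) lam S R := by
      simp [hR]
    have hA : ∀ x ∈ S.image Fin.val, x < m := by simp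
    have hB (s s' : ℕ) (hc : IsGap (S.image Fin.val) s s') : (twosBetween t s s').card ≤ 1 := by
      by_contra! h
      have hne : (twosBetween t s s').Nonempty := Finset.card_pos.1 (by omega)
      have hlt := Finset.min'_lt_max'_of_card _ h
      obtain ⟨hs₁, -, hb₁⟩ := mem_twosBetween.1 (Finset.min'_mem _ hne)
      obtain ⟨-, hs₂, hb₂⟩ := mem_twosBetween.1 (Finset.max'_mem _ hne)
      have hs'm := hA s' hc.2.1
      refine notMem_influenced_of_twos (fun x hx => by rcases ht x hx with h | h <;> omega)
        hb₁ hb₂ hlt (fun x hx => ?_) R (v := ⟨(twosBetween t s s').min' hne, by omega⟩) le_rfl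
        hlt.le (hall _)
      have := hc.2.2.2 x (Finset.mem_image_of_mem _ hx)
      omega
    intro s s' hc
    rcases twosBetween_eq_empty_or_singleton (hB s s' hc) with he | ⟨b, hb⟩
    · exact .inl he
    obtain ⟨hsb, hbs, -⟩ := mem_twosBetween.1 (hb ▸ Finset.mem_singleton_self b)
    obtain ⟨a, -, hba⟩ := (mem_influenced_iff_reachedBy hlam ht h0 h1 hB R
      ⟨b, hbs.trans (hA s' hc.2.1)⟩).1 (hall _)
    rw [activatesAt_iff_gapTime hc hsb.le hbs.le (hB s s' hc), gapTime_of_eq_singleton hb] at hba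
    rcases hba with ⟨h, -⟩ | ⟨h, -⟩ | ⟨-, hw, -⟩
    · omega
    · omega
    · exact .inr ⟨b, hb, hw⟩
  · intro hV
    refine ⟨m, Finset.eq_univ_of_forall fun v => ?_⟩
    exact (mem_influenced_iff_reachedBy hlam ht h0 h1
      (fun s s' hc => (hV s s' hc).card_twosBetween_le) m v).2 (hV.reachedBy h0 h1 (by simp) v.isLt)

end PathGraph

section Translation

variable {T : ℕ → ℕ} {lam c : ℕ}

lemma isGap_map_add_iff {B : Finset ℕ} {s s' : ℕ} :
    IsGap (B.map (addLeftEmbedding c)) s s' ↔ ∃ p p', IsGap B p p' ∧ s = c + p ∧ s' = c + p' := by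
  simp only [IsGap, Finset.mem_map, addLeftEmbedding_apply, forall_exists_index, and_imp,
    forall_apply_eq_imp_iff₂]
  constructor
  · rintro ⟨⟨p, hp, rfl⟩, ⟨p', hp', rfl⟩, hlt, h⟩
    exact ⟨p, p', ⟨hp, hp', by omega, fun x hx => by have := h x hx; omega⟩, rfl, rfl⟩
  · rintro ⟨p, p', ⟨hp, hp', hlt, h⟩, rfl, rfl⟩
    exact ⟨⟨p, hp, rfl⟩, ⟨p', hp', rfl⟩, by omega, fun x hx => by have := h x hx; omega⟩

lemma twosBetween_add (s s' : ℕ) :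
    twosBetween T (c + s) (c + s') =
      (twosBetween (fun x => T (c + x)) s s').map (addLeftEmbedding c) := by
  ext x
  simp only [Finset.mem_map, mem_twosBetween, addLeftEmbedding_apply]
  constructor
  · rintro ⟨h₁, h₂, h₃⟩
    exact ⟨x - c, ⟨by omega, by omega, by rwa [Nat.add_sub_cancel' (by omega)]⟩, by omega⟩
  · rintro ⟨y, ⟨h₁, h₂, h₃⟩, rfl⟩
    exact ⟨by omega, by omega, h₃⟩

lemma validGap_add_iff {s s' : ℕ} :
    ValidGap T lam (c + s) (c + s') ↔ ValidGap (fun x => T (c + x)) lam s s' := by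
  have hwin {b : ℕ} : WindowFits lam (c + b) (c + s) (c + s') ↔ WindowFits lam b s s' := by
    unfold WindowFits; omega
  unfold ValidGap
  rw [twosBetween_add, Finset.map_eq_empty]
  refine or_congr_right ⟨fun ⟨b, hb, hw⟩ => ?_, fun ⟨b, hb, hw⟩ => ⟨c + b, by simp [hb], hwin.2 hw⟩⟩
  obtain ⟨b', hb'⟩ := Finset.card_eq_one.1 (by rw [← Finset.card_map (addLeftEmbedding c), hb,
    Finset.card_singleton])
  rw [hb', Finset.map_singleton, Finset.singleton_inj, addLeftEmbedding_apply] at hb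
  subst hb
  exact ⟨b', hb', hwin.1 hw⟩

lemma validSeeds_map_add_iff {B : Finset ℕ} :
    ValidSeeds T lam (B.map (addLeftEmbedding c)) ↔ ValidSeeds (fun x => T (c + x)) lam B := by
  constructor
  · intro h p p' hc
    exact validGap_add_iff.1 (h _ _ (isGap_map_add_iff.2 ⟨p, p', hc, rfl, rfl⟩))
  · intro h s s' hc
    obtain ⟨p, p', hp, rfl, rfl⟩ := isGap_map_add_iff.1 hc
    exact validGap_add_iff.2 (h p p' hp)

lemma exists_map_addLeftEmbedding_eq {A : Finset ℕ} (h : ∀ x ∈ A, c ≤ x) :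
    ∃ B : Finset ℕ, B.map (addLeftEmbedding c) = A := by
  refine ⟨A.image (· - c), Finset.ext fun x => ?_⟩
  simp only [Finset.mem_map, Finset.mem_image, addLeftEmbedding_apply]
  constructor
  · rintro ⟨_, ⟨y, hy, rfl⟩, rfl⟩
    rwa [Nat.add_sub_cancel' (h y hy)]
  · exact fun hx => ⟨x - c, ⟨x, hx, rfl⟩, Nat.add_sub_cancel' (h x hx)⟩

end Translation

/-- The value off the path is never used. -/
def natThreshold {n : ℕ} (t : Fin n → ℕ) (x : ℕ) : ℕ := if h : x < n then t ⟨x, h⟩ else 1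

lemma natThreshold_val {n : ℕ} (t : Fin n → ℕ) (v : Fin n) : natThreshold t v.val = t v :=
  dif_pos v.isLt

def validSeedSizes (n lam : ℕ) (T : ℕ → ℕ) (i : ℕ) : Set ℕ :=
  {c | ∃ A : Finset ℕ, i ∈ A ∧ n - 1 ∈ A ∧ A ⊆ Icc i (n - 1) ∧ ValidSeeds T lam A ∧ A.card = c}

theorem sigmaMin_eq_sInf_validSeedSizes {n lam : ℕ} (hlam : 1 ≤ lam) {t : Fin n → ℕ}
    (htv : ∀ v, t v = 1 ∨ t v = 2) (i : ℕ) (hi : i < n) :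
    sigmaMin n lam t i hi = sInf (validSeedSizes n lam (natThreshold t) i) := by
  have hsub : (fun k : Fin (n - i) => t ⟨i + k, by have := k.isLt; omega⟩) =
      fun k => natThreshold t (i + k.val) := by
    funext k
    exact (natThreshold_val t ⟨i + k, _⟩).symm
  have ht : ∀ x < n - i, natThreshold t (i + x) = 1 ∨ natThreshold t (i + x) = 2 := fun x hx =>
    natThreshold_val t ⟨i + x, by omega⟩ ▸ htv _
  unfold sigmaMin validSeedSizes
  simp only [hsub]
  congr 1
  ext c
  constructor
  · rintro ⟨S, hS, hS0, hS1, rfl⟩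
    have h0 : 0 ∈ S.image Fin.val := Finset.mem_image_of_mem _ hS0
    have h1 : n - i - 1 ∈ S.image Fin.val := Finset.mem_image_of_mem _ hS1
    refine ⟨(S.image Fin.val).map (addLeftEmbedding i), ?_, ?_, ?_,
      validSeeds_map_add_iff.2 ((isTargetSet_pathGraph_iff hlam ht h0 h1).1 hS), ?_⟩
    · exact Finset.mem_map_of_mem _ h0
    · simpa [show i + (n - i - 1) = n - 1 by omega] using Finset.mem_map_of_mem
        (addLeftEmbedding i) h1
    · intro x hx
      simp only [Finset.mem_map, Finset.mem_image, addLeftEmbedding_apply] at hx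
      obtain ⟨_, ⟨k, -, rfl⟩, rfl⟩ := hx
      have := k.isLt
      exact Finset.mem_Icc.2 ⟨by omega, by omega⟩
    · rw [Finset.card_map, Finset.card_image_of_injective _ Fin.val_injective]
  · rintro ⟨A, hiA, hnA, hAsub, hV, rfl⟩
    obtain ⟨B, rfl⟩ := exists_map_addLeftEmbedding_eq fun x hx => (Finset.mem_Icc.1 (hAsub hx)).1
    have hB (x : ℕ) (hx : x ∈ B) : x < n - i := by
      have := Finset.mem_Icc.1 (hAsub (Finset.mem_map_of_mem (addLeftEmbedding i) hx))
      simp only [addLeftEmbedding_apply] at this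
      omega
    have hmem {x : ℕ} (hx : i + x ∈ B.map (addLeftEmbedding i)) : x ∈ B := by
      simpa using hx
    have h0 : 0 ∈ B := hmem (by simpa using hiA)
    have h1 : n - i - 1 ∈ B := hmem (by rwa [show i + (n - i - 1) = n - 1 by omega])
    refine ⟨B.attachFin hB, ?_, (Finset.mem_attachFin hB).2 h0, (Finset.mem_attachFin hB).2 h1,
      by rw [Finset.card_attachFin, Finset.card_map]⟩
    rw [isTargetSet_pathGraph_iff hlam ht] <;> rw [Finset.image_val_attachFin]
    exacts [validSeeds_map_add_iff.1 hV, h0, h1]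

section Surgery

variable {T : ℕ → ℕ} {lam : ℕ}

lemma validSeeds_Icc (a b : ℕ) : ValidSeeds T lam (Icc a b) := by
  rintro s s' ⟨hs, hs', hlt, h⟩
  rw [Finset.mem_Icc] at hs hs'
  have := h (s + 1) (Finset.mem_Icc.2 ⟨by omega, by omega⟩)
  left
  exact Finset.eq_empty_of_forall_notMem fun x hx => by
    have := mem_twosBetween.1 hx
    omega

lemma ValidSeeds.filter_lt {A : Finset ℕ} (hA : ValidSeeds T lam A) (d : ℕ) :
    ValidSeeds T lam (A.filter (d < ·)) := by
  rintro s s' ⟨hs, hs', hlt, h⟩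
  rw [Finset.mem_filter] at hs hs'
  refine hA s s' ⟨hs.1, hs'.1, hlt, fun y hy => ?_⟩
  by_cases hdy : d < y
  · exact h y (Finset.mem_filter.2 ⟨hy, hdy⟩)
  · exact .inl (by omega)

lemma ValidSeeds.insert_of_lt {B : Finset ℕ} {x : ℕ} (hB : ValidSeeds T lam B)
    (hx : ∀ y ∈ B, x < y) (hgap : ∀ y ∈ B, (∀ z ∈ B, y ≤ z) → ValidGap T lam x y) :
    ValidSeeds T lam (insert x B) := by
  rintro s s' ⟨hs, hs', hlt, h⟩
  rcases Finset.mem_insert.1 hs' with rfl | hs'B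
  · rcases Finset.mem_insert.1 hs with rfl | hsB
    · omega
    · exact absurd (hx s hsB) (by omega)
  rcases Finset.mem_insert.1 hs with rfl | hsB
  · refine hgap s' hs'B fun z hz => ?_
    have := h z (Finset.mem_insert_of_mem hz)
    have := hx z hz
    omega
  · exact hB s s' ⟨hsB, hs'B, hlt, fun y hy => h y (Finset.mem_insert_of_mem hy)⟩

variable {n : ℕ}

lemma validSeedSizes_nonempty {i : ℕ} (hi : i ≤ n - 1) : (validSeedSizes n lam T i).Nonempty :=
  ⟨_, Icc i (n - 1), by simpa using hi, by simpa using hi, subset_rfl, validSeeds_Icc _ _, rfl⟩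

/-- Adding `i` to an optimal seed set of `{d, …, n - 1}`. -/
lemma sInf_validSeedSizes_le_succ {i d : ℕ} (hid : i < d) (hd : d ≤ n - 1)
    (hT : ∀ x, i < x → x < d → T x ≠ 2) :
    sInf (validSeedSizes n lam T i) ≤ sInf (validSeedSizes n lam T d) + 1 := by
  obtain ⟨A, hdA, hnA, hAsub, hV, hcard⟩ :=
    Nat.sInf_mem (validSeedSizes_nonempty (lam := lam) (T := T) hd)
  have hge (y : ℕ) (hy : y ∈ A) : d ≤ y := (Finset.mem_Icc.1 (hAsub hy)).1
  have hiA : i ∉ A := fun h => by have := hge i h; omega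
  rw [← hcard, ← Finset.card_insert_of_notMem hiA]
  refine Nat.sInf_le ⟨insert i A, Finset.mem_insert_self _ _, Finset.mem_insert_of_mem hnA,
    Finset.insert_subset (Finset.mem_Icc.2 ⟨le_rfl, by omega⟩) (hAsub.trans ?_),
    hV.insert_of_lt (fun y hy => by have := hge y hy; omega) fun y hy hmin => ?_, rfl⟩
  · exact Finset.Icc_subset_Icc_left hid.le
  · obtain rfl : y = d := le_antisymm (hmin d hdA) (hge y hy)
    exact .inl (Finset.eq_empty_of_forall_notMem fun x hx => by
      obtain ⟨h₁, h₂, h₃⟩ := mem_twosBetween.1 hx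
      exact hT x h₁ h₂ h₃)

/-- Replacing the part of an optimal seed set of `{i, …, n - 1}` up to `d` by `d` alone. -/
lemma sInf_validSeedSizes_le {i d : ℕ} (hid : i ≤ d) (hd : d ≤ n - 1) (htd : T d = 2) :
    sInf (validSeedSizes n lam T d) ≤ sInf (validSeedSizes n lam T i) := by
  obtain ⟨A, hiA, hnA, hAsub, hV, hcard⟩ :=
    Nat.sInf_mem (validSeedSizes_nonempty (lam := lam) (T := T) (hid.trans hd))
  set B := A.filter (d < ·)
  have hBA : B ⊂ A := Finset.filter_ssubset.2 ⟨i, hiA, by omega⟩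
  have hgap (y : ℕ) (hy : y ∈ B) (hmin : ∀ z ∈ B, y ≤ z) : ValidGap T lam d y := by
    obtain ⟨hyA, hdy⟩ := Finset.mem_filter.1 hy
    obtain ⟨s, s', hc, hs, hs'⟩ := exists_isGap hiA hyA hid hdy
    obtain rfl : s' = y := le_antisymm (by have := hc.2.2.2 y hyA; omega)
      (hmin s' (Finset.mem_filter.2 ⟨hc.2.1, hs'⟩))
    exact (hV s s' hc).of_two hs hs' htd
  calc sInf (validSeedSizes n lam T d) ≤ (insert d B).card := by
        refine Nat.sInf_le ⟨insert d B, Finset.mem_insert_self _ _, ?_, ?_,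
          (hV.filter_lt d).insert_of_lt (fun y hy => (Finset.mem_filter.1 hy).2) hgap, rfl⟩
        · rcases hd.lt_or_eq with hd | rfl
          · exact Finset.mem_insert_of_mem (Finset.mem_filter.2 ⟨hnA, hd⟩)
          · exact Finset.mem_insert_self _ _
        · refine Finset.insert_subset (Finset.mem_Icc.2 ⟨le_rfl, hd⟩) fun y hy => ?_
          obtain ⟨hyA, hdy⟩ := Finset.mem_filter.1 hy
          exact Finset.mem_Icc.2 ⟨hdy.le, (Finset.mem_Icc.1 (hAsub hyA)).2⟩
    _ ≤ B.card + 1 := Finset.card_insert_le _ _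
    _ ≤ A.card := Finset.card_lt_card hBA
    _ = _ := hcard

end Surgery

/-- for every threshold-2 vertex `k` of the path (with `d = D[k]`
the next threshold-2 vertex), there is an integer `σ` such that
`Σ(i) ∈ {σ, σ − 1}` for all `k ≤ i ≤ D[k]`. -/
theorem stmt11 (n lam : ℕ) (hlam : 1 ≤ lam) (t : Fin n → ℕ)
    (htv : ∀ v, t v = 1 ∨ t v = 2)
    (k d : Fin n) (htd : t d = 2)
    (hbet : ∀ x : Fin n, k < x → x < d → t x = 1) :
    ∃ σ : ℕ, ∀ (i : ℕ) (hi : i < n), (k : ℕ) ≤ i → i ≤ (d : ℕ) →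
      sigmaMin n lam t i hi = σ ∨ sigmaMin n lam t i hi = σ - 1 := by
  refine ⟨sigmaMin n lam t d d.isLt + 1, fun i hi hki hid => ?_⟩
  rcases hid.lt_or_eq with hid | rfl
  · have hones (x : ℕ) (hix : i < x) (hxd : x < d) : natThreshold t x ≠ 2 := by
      have hxn : x < n := hxd.trans d.isLt
      rw [natThreshold_val t ⟨x, hxn⟩, hbet ⟨x, hxn⟩ (Fin.lt_def.2 (by simp; omega)) hxd]
      omega
    have hupper := sInf_validSeedSizes_le_succ (n := n) (lam := lam) hid (by omega) hones
    have hlower := sInf_validSeedSizes_le (n := n) (lam := lam) hid.le (by omega)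
      ((natThreshold_val t d).trans htd)
    rw [sigmaMin_eq_sInf_validSeedSizes hlam htv, sigmaMin_eq_sInf_validSeedSizes hlam htv]
    omega
  · exact .inr rfl
end

section
/- If every vertex of the ring R^n has threshold 2, then a set S is a TWC target set if and only if every vertex not in S has both neighbors in S simultaneously active at some round; consequently the minimum size of a TWC target set for R^n is ⌈n/2⌉, for every window size λ ≥ 1. -/
set_option linter.unusedVariables false

open Finset

variable {V : Type*} [Fintype V] [DecidableEq V]

/-! With every threshold equal to the degree, a vertex outside `S` is influenced in round `r`
exactly when all of its neighbours are active in round `r`; this gives the characterisation.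
Two adjacent vertices outside `S` would each have to wait for the other to be influenced first,
so the complement of a target set is independent. On the ring, `v ↦ v + 1` then injects it
into `S`, forcing `2 |S| ≥ n`, and the even vertices attain `⌈n/2⌉`: since `λ ≥ 1`, they are all
active in round 1, and every odd vertex has both neighbours even. -/

section Dynamics

variable (G : SimpleGraph V) [DecidableRel G.Adj] (t : V → ℕ) (lam : ℕ) (S : Finset V)

lemma influenced_zero : influenced G t lam S 0 = S := by
  rw [influenced]

lemma influenced_mono : Monotone (influenced G t lam S) :=
  monotone_nat_of_le_succ fun r => by
    rw [influenced_succ]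
    exact subset_union_left

lemma activeSet_subset_influenced (r : ℕ) :
    activeSet G t lam S r ⊆ influenced G t lam S (r - 1) := by
  unfold activeSet
  split_ifs
  · exact empty_subset _
  · exact subset_rfl
  · exact sdiff_subset

lemma activeSet_one (hlam : 1 ≤ lam) : activeSet G t lam S 1 = S := by
  simp [activeSet, hlam, influenced_zero]

lemma mem_influenced_iff (r : ℕ) (v : V) :
    v ∈ influenced G t lam S r ↔
      v ∈ S ∨ ∃ r', 1 ≤ r' ∧ r' ≤ r ∧
        t v ≤ #(G.neighborFinset v ∩ activeSet G t lam S r') := by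
  induction r with
  | zero => simp [influenced_zero]
  | succ r ih =>
    rw [influenced_succ, mem_union, ih, mem_filter]
    constructor
    · rintro ((hS | ⟨r', h1, hr, hv⟩) | ⟨-, hv⟩)
      · exact .inl hS
      · exact .inr ⟨r', h1, by omega, hv⟩
      · exact .inr ⟨r + 1, by omega, le_rfl, hv⟩
    · rintro (hS | ⟨r', h1, hr, hv⟩)
      · exact .inl (.inl hS)
      · obtain hr | rfl := hr.lt_or_eq
        · exact .inl (.inr ⟨r', h1, by omega, hv⟩)
        · exact .inr ⟨mem_univ v, hv⟩

lemma isTargetSet_iff_forall_exists_mem_influenced :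
    isTargetSet G t lam S ↔ ∀ v, ∃ r, v ∈ influenced G t lam S r := by
  refine ⟨fun ⟨R, hR⟩ v => ⟨R, hR ▸ mem_univ v⟩, fun h => ?_⟩
  choose f hf using h
  refine ⟨univ.sup f, eq_univ_iff_forall.mpr fun v => ?_⟩
  exact influenced_mono G t lam S (le_sup (mem_univ v)) (hf v)

lemma isTargetSet_iff :
    isTargetSet G t lam S ↔ ∀ v ∉ S, ∃ r, 1 ≤ r ∧
      t v ≤ #(G.neighborFinset v ∩ activeSet G t lam S r) := by
  rw [isTargetSet_iff_forall_exists_mem_influenced]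
  refine forall_congr' fun v => ?_
  simp only [mem_influenced_iff]
  by_cases hv : v ∈ S
  · simp [hv]
  · simp only [hv, false_or, not_false_eq_true, forall_const]
    exact ⟨fun ⟨_, r, h1, _, h⟩ => ⟨r, h1, h⟩, fun ⟨r, h1, h⟩ => ⟨r, r, h1, le_rfl, h⟩⟩

end Dynamics

section DegreeThreshold

variable {G : SimpleGraph V} [DecidableRel G.Adj] {t : V → ℕ} {lam : ℕ} {S : Finset V}

lemma degree_le_card_neighborFinset_inter_iff {v : V} {A : Finset V} :
    G.degree v ≤ #(G.neighborFinset v ∩ A) ↔ G.neighborFinset v ⊆ A := by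
  rw [← G.card_neighborFinset_eq_degree]
  constructor
  · intro h
    exact inter_eq_left.mp (eq_of_subset_of_card_le inter_subset_left h)
  · intro h
    rw [inter_eq_left.mpr h]

lemma isTargetSet_iff_of_threshold_eq_degree (ht : ∀ v, t v = G.degree v) :
    isTargetSet G t lam S ↔ ∀ v ∉ S, ∃ r, 1 ≤ r ∧
      ∀ u, G.Adj v u → u ∈ activeSet G t lam S r := by
  simp only [isTargetSet_iff, ht, degree_le_card_neighborFinset_inter_iff, subset_iff,
    SimpleGraph.mem_neighborFinset]

lemma notMem_influenced_of_adj (ht : ∀ v, G.degree v ≤ t v) (r : ℕ) {v u : V}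
    (hvu : G.Adj v u) (hv : v ∉ S) (hu : u ∉ S) : v ∉ influenced G t lam S r := by
  induction r using Nat.strong_induction_on generalizing v u with
  | _ r ih =>
    rw [mem_influenced_iff]
    rintro (hvS | ⟨r', h1, hr, hact⟩)
    · exact hv hvS
    · have hsub := degree_le_card_neighborFinset_inter_iff.mp ((ht v).trans hact)
      have hu_active := hsub ((G.mem_neighborFinset v u).mpr hvu)
      exact ih (r' - 1) (by omega) hvu.symm hu hv
        (activeSet_subset_influenced G t lam S r' hu_active)

lemma mem_of_adj_of_isTargetSet (ht : ∀ v, G.degree v ≤ t v) (hS : isTargetSet G t lam S)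
    {v u : V} (hvu : G.Adj v u) (hv : v ∉ S) : u ∈ S := by
  by_contra hu
  obtain ⟨R, hR⟩ := hS
  exact notMem_influenced_of_adj ht R hvu hv hu (hR ▸ mem_univ v)

end DegreeThreshold

section Ring

open SimpleGraph

theorem ringGraph_eq_cycleGraph : ∀ n, ringGraph n = cycleGraph n
  | 0 => Subsingleton.elim _ _
  | 1 => Subsingleton.elim _ _
  | m + 2 => by
    ext u v
    have hsucc (a b : Fin (m + 2)) : (a.val + 1) % (m + 2) = b.val ↔ b = a + 1 := by
      simp [Fin.ext_iff, Fin.val_add, eq_comm]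
    rw [cycleGraph_adj, sub_eq_iff_eq_add', sub_eq_iff_eq_add']
    simp only [ringGraph, hsucc]
    constructor
    · rintro ⟨-, h⟩
      exact h.symm
    · intro h
      refine ⟨?_, h.symm⟩
      rintro rfl
      simp at h

lemma ringGraph_degree {m : ℕ} (v : Fin (m + 3)) : (ringGraph (m + 3)).degree v = 2 := by
  convert cycleGraph_degree_three_le (v := v)
  exact ringGraph_eq_cycleGraph _

lemma ringGraph_adj_add_one {m : ℕ} (v : Fin (m + 2)) : (ringGraph (m + 2)).Adj v (v + 1) := by
  simp [ringGraph_eq_cycleGraph, cycleGraph_adj]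

lemma even_val_of_ringGraph_adj {m : ℕ} {v u : Fin (m + 2)} (hv : ¬Even v.val)
    (hvu : (ringGraph (m + 2)).Adj v u) : Even u.val := by
  rw [ringGraph_eq_cycleGraph, cycleGraph_adj, sub_eq_iff_eq_add', sub_eq_iff_eq_add'] at hvu
  rcases hvu with rfl | rfl
  · rw [Fin.val_add_one] at hv
    split_ifs at hv
    · exact absurd Even.zero hv
    · simpa [Nat.even_add_one] using hv
  · rw [Fin.val_add_one]
    split_ifs
    · exact Even.zero
    · exact Nat.even_add_one.mpr hv

lemma card_compl_le_card_of_ringGraph {m : ℕ} {S : Finset (Fin (m + 2))}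
    (hS : ∀ v u, (ringGraph (m + 2)).Adj v u → v ∉ S → u ∈ S) : #Sᶜ ≤ #S := by
  rw [← card_map (Equiv.addRight (1 : Fin (m + 2))).toEmbedding]
  refine card_le_card fun u hu => ?_
  obtain ⟨v, hv, rfl⟩ := mem_map.mp hu
  exact hS v _ (ringGraph_adj_add_one v) (mem_compl.mp hv)

end Ring

lemma card_filter_even_range (n : ℕ) : #{i ∈ range n | Even i} = (n + 1) / 2 := by
  induction n with
  | zero => rfl
  | succ n ih =>
    rw [range_add_one, filter_insert]
    split_ifs with h
    · rw [card_insert_of_notMem (by simp), ih]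
      grind
    · rw [ih]
      grind

lemma card_filter_even_val (n : ℕ) : #{v : Fin n | Even v.val} = (n + 1) / 2 := by
  rw [← card_filter_even_range, ← card_map Fin.valEmbedding]
  congr 1
  ext i
  simp [Fin.exists_iff, and_comm]

/-- in the ring with all thresholds 2, `S` is a TWC target set iff
every vertex outside `S` has both of its neighbours simultaneously active at
some round; and the minimum size of a TWC target set is `⌈n/2⌉`. -/
theorem stmt15 (n lam : ℕ) (hn : 3 ≤ n) (hlam : 1 ≤ lam) :
    (∀ S : Finset (Fin n),
      isTargetSet (ringGraph n) (fun _ => 2) lam S ↔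
        ∀ v : Fin n, v ∉ S → ∃ r : ℕ, 1 ≤ r ∧
          ∀ u : Fin n, (ringGraph n).Adj v u →
            u ∈ activeSet (ringGraph n) (fun _ => 2) lam S r) ∧
    (∃ S : Finset (Fin n),
      isTargetSet (ringGraph n) (fun _ => 2) lam S ∧ S.card = (n + 1) / 2) ∧
    (∀ S : Finset (Fin n),
      isTargetSet (ringGraph n) (fun _ => 2) lam S → (n + 1) / 2 ≤ S.card) := by
  obtain ⟨m, rfl⟩ : ∃ m, n = m + 3 := ⟨n - 3, by omega⟩
  have hdeg (v : Fin (m + 3)) : 2 = (ringGraph (m + 3)).degree v := (ringGraph_degree v).symm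
  refine ⟨fun S => isTargetSet_iff_of_threshold_eq_degree hdeg,
    ⟨univ.filter fun v => Even v.val, ?_, card_filter_even_val _⟩, fun S hS => ?_⟩
  · rw [isTargetSet_iff_of_threshold_eq_degree hdeg]
    intro v hv
    refine ⟨1, le_rfl, fun u hvu => ?_⟩
    rw [activeSet_one _ _ _ _ hlam, mem_filter]
    exact ⟨mem_univ u, even_val_of_ringGraph_adj (by simpa using hv) hvu⟩
  · have hcompl := card_compl_le_card_of_ringGraph
      (fun v u => mem_of_adj_of_isTargetSet (hdeg · |>.ge) hS)
    rw [card_compl, Fintype.card_fin] at hcompl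
    omega
end
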